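/- In any WVG, if player i annexes a dummy player j (a player that is critical in no coalition), then the Banzhaf index of every remaining player in the new game equals its Banzhaf index in the original game; in particular β_{&{i,j}}(v') = β_i(v). -/

import Mathlib

open scoped Classical

section WVG

variable {α : Type*} [Fintype α] [DecidableEq α]

/-- A coalition `S` is winning in the WVG with quota `q` and weights `w`
iff its total weight is at least the quota. -/
def winning (q : ℕ) (w : α → ℕ) (S : Finset α) : Prop :=
  q ≤ ∑ j ∈ S, w j

/-- `eta q w i` is the number of coalitions containing `i` that are winning
and become losing when `i` is removed (the raw Banzhaf count of `i`). -/
noncomputable def eta (q : ℕ) (w : α → ℕ) (i : α) : ℕ :=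
  (Finset.univ.filter fun S : Finset α =>
    i ∈ S ∧ winning q w S ∧ ¬ winning q w (S.erase i)).card

/-- Total raw Banzhaf count over all players. -/
noncomputable def totalEta (q : ℕ) (w : α → ℕ) : ℕ :=
  ∑ i, eta q w i

/-- Banzhaf index of player `i`. -/
noncomputable def banzhaf (q : ℕ) (w : α → ℕ) (i : α) : ℚ :=
  (eta q w i : ℚ) / (totalEta q w : ℚ)

/-- Shapley-Shubik index of player `i`. -/
noncomputable def shapley (q : ℕ) (w : α → ℕ) (i : α) : ℚ :=
  ∑ S ∈ (Finset.univ.filter fun S : Finset α =>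
      i ∈ S ∧ winning q w S ∧ ¬ winning q w (S.erase i)),
    ((S.card - 1).factorial * (Fintype.card α - S.card).factorial : ℚ) /
      ((Fintype.card α).factorial : ℚ)

end WVG

/-!
A dummy `j` never changes whether a coalition wins, so the swing coalitions of any other
player `x` come in pairs `S`, `S ∪ {j}` with `j ∉ S`; hence `η_x` is twice the swing count
of `x` in the subgame on `N \ {j}`. Because `j` is a dummy, the merged weight `w_i + w_j`
wins exactly where `w_i` does, so the annexed game is that subgame. Every raw count, and
therefore the total, is halved, and the Banzhaf ratios are unchanged.
-/

open Finset

section SimpleGame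

variable {α : Type*} [DecidableEq α]

def IsSwing (W : Finset α → Prop) (x : α) (S : Finset α) : Prop :=
  x ∈ S ∧ W S ∧ ¬ W (S.erase x)

def restrictGame (W : Finset α → Prop) (p : α → Prop) [DecidablePred p] :
    Finset {a // p a} → Prop :=
  fun T => W (T.map (Function.Embedding.subtype p))

variable {W : Finset α → Prop} {j x : α}

lemma isSwing_map_subtype_iff (p : α → Prop) [DecidablePred p] (hx : p x)
    (T : Finset {a // p a}) :
    IsSwing W x (T.map (Function.Embedding.subtype p)) ↔
      IsSwing (restrictGame W p) ⟨x, hx⟩ T := by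
  have hmem : x ∈ T.map (Function.Embedding.subtype p) ↔ ⟨x, hx⟩ ∈ T :=
    mem_map' (Function.Embedding.subtype p) (a := ⟨x, hx⟩)
  have herase : (T.map (Function.Embedding.subtype p)).erase x =
      (T.erase ⟨x, hx⟩).map (Function.Embedding.subtype p) :=
    (map_erase (Function.Embedding.subtype p) T ⟨x, hx⟩).symm
  rw [IsSwing, IsSwing, hmem, herase, restrictGame, restrictGame]

variable [Fintype α]

noncomputable def swingCount (W : Finset α → Prop) (x : α) : ℕ :=
  (univ.filter (IsSwing W x)).card

lemma insert_iff_of_swingCount_eq_zero (hW : Monotone W) (hj : swingCount W j = 0)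
    (S : Finset α) : W (insert j S) ↔ W S := by
  refine ⟨fun hS => ?_, hW (subset_insert j S)⟩
  by_cases hjS : j ∈ S
  · rwa [insert_eq_of_mem hjS] at hS
  by_contra hnS
  have hswing : IsSwing W j (insert j S) :=
    ⟨mem_insert_self j S, hS, by rwa [erase_insert hjS]⟩
  rw [swingCount, card_eq_zero, filter_eq_empty_iff] at hj
  exact hj (mem_univ _) hswing

lemma isSwing_insert_iff_of_swingCount_eq_zero (hW : Monotone W) (hj : swingCount W j = 0)
    (hxj : x ≠ j) (S : Finset α) : IsSwing W x (insert j S) ↔ IsSwing W x S := by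
  simp only [IsSwing, mem_insert, hxj, false_or, erase_insert_of_ne hxj.symm,
    insert_iff_of_swingCount_eq_zero hW hj]

lemma swingCount_eq_two_mul_restrictGame (hW : Monotone W) (hj : swingCount W j = 0)
    (hxj : x ≠ j) :
    swingCount W x = 2 * swingCount (restrictGame W (· ≠ j)) ⟨x, hxj⟩ := by
  set e := Function.Embedding.subtype (· ≠ j)
  have hswing_erase (S : Finset α) : IsSwing W x (S.erase j) ↔ IsSwing W x S := by
    by_cases hjS : j ∈ S
    · rw [← isSwing_insert_iff_of_swingCount_eq_zero hW hj hxj, insert_erase hjS]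
    · rw [erase_eq_of_notMem hjS]
  have hmap_subtype (S : Finset α) : (S.subtype (· ≠ j)).map e = S.erase j := by
    rw [subtype_map, filter_ne']
  have hj_notMem_map (T : Finset {a // a ≠ j}) : j ∉ T.map e := by
    simp [e]
  have hsubtype_map (T : Finset {a // a ≠ j}) : (T.map e).subtype (· ≠ j) = T := by
    ext t; simp [e, t.2]
  have hsubtype_insert_map (T : Finset {a // a ≠ j}) :
      (insert j (T.map e)).subtype (· ≠ j) = T := by
    ext t; simp [e, t.2]
  set B := univ.filter (IsSwing (restrictGame W (· ≠ j)) ⟨x, hxj⟩)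
  have hcard : #(B ×ˢ (univ : Finset Bool)) = 2 * #B := by
    rw [card_product, card_univ, Fintype.card_bool, mul_comm]
  rw [swingCount, swingCount, ← hcard]
  refine card_nbij' (fun S => (S.subtype (· ≠ j), decide (j ∈ S)))
    (fun p => if p.2 then insert j (p.1.map e) else p.1.map e) ?_ ?_ ?_ ?_
  · intro S hS
    simp only [B, coe_filter, coe_product, mem_univ, true_and, Set.mem_ofPred_eq,
      Set.mem_prod, coe_univ, Set.mem_univ, and_true] at hS ⊢
    rwa [← isSwing_map_subtype_iff, hmap_subtype, hswing_erase]
  · rintro ⟨T, b⟩ hT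
    simp only [B, coe_filter, coe_product, mem_univ, true_and, Set.mem_ofPred_eq,
      Set.mem_prod, coe_univ, Set.mem_univ, and_true] at hT ⊢
    rw [← isSwing_map_subtype_iff] at hT
    cases b
    · exact hT
    · exact (isSwing_insert_iff_of_swingCount_eq_zero hW hj hxj _).mpr hT
  · intro S _
    by_cases hjS : j ∈ S <;> simp [hjS, hmap_subtype]
  · rintro ⟨T, b⟩ _
    cases b <;> simp [hsubtype_map, hsubtype_insert_map, hj_notMem_map]

end SimpleGame

section WVG

variable {α : Type*}

lemma winning_mono (q : ℕ) (w : α → ℕ) : Monotone (winning q w) :=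
  fun _ _ hST hS => hS.trans (sum_le_sum_of_subset hST)

variable [DecidableEq α]

def annexWeights (w : α → ℕ) (i j : α) : {x // x ≠ j} → ℕ :=
  fun x => if x.1 = i then w i + w j else w x.1

variable {q : ℕ} {w : α → ℕ} {i j : α}

lemma sum_annexWeights (hij : i ≠ j) (T : Finset {x // x ≠ j}) :
    ∑ t ∈ T, annexWeights w i j t =
      ∑ a ∈ T.map (Function.Embedding.subtype _), w a + if ⟨i, hij⟩ ∈ T then w j else 0 := by
  have hsplit (t : {x // x ≠ j}) :
      annexWeights w i j t = w t + if ⟨i, hij⟩ = t then w j else 0 := by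
    by_cases hti : t.1 = i
    · simp [annexWeights, hti, Subtype.ext_iff]
    · simp [annexWeights, hti, Subtype.ext_iff, Ne.symm hti]
  rw [sum_map, sum_congr rfl fun t _ => hsplit t, sum_add_distrib, sum_ite_eq]
  rfl

variable [Fintype α]

lemma eta_eq_swingCount : eta q w = swingCount (winning q w) := by
  funext x
  unfold eta swingCount IsSwing
  congr

lemma winning_annexWeights (hij : i ≠ j) (hj : eta q w j = 0) :
    winning q (annexWeights w i j) = restrictGame (winning q w) (· ≠ j) := by
  funext T
  have hdummy : swingCount (winning q w) j = 0 := by rwa [← eta_eq_swingCount]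
  rw [restrictGame, eq_iff_iff, winning, sum_annexWeights hij]
  split_ifs
  · rw [← insert_iff_of_swingCount_eq_zero (winning_mono q w) hdummy, winning,
      sum_insert (by simp), add_comm]
  · rw [add_zero, winning]

lemma eta_eq_two_mul_eta_annexWeights (hij : i ≠ j) (hj : eta q w j = 0) {x : α}
    (hxj : x ≠ j) : eta q w x = 2 * eta q (annexWeights w i j) ⟨x, hxj⟩ := by
  rw [eta_eq_swingCount, eta_eq_swingCount, winning_annexWeights hij hj]
  exact swingCount_eq_two_mul_restrictGame (winning_mono q w)
    (by rwa [← eta_eq_swingCount]) hxj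

lemma totalEta_eq_two_mul_totalEta_annexWeights (hij : i ≠ j) (hj : eta q w j = 0) :
    totalEta q w = 2 * totalEta q (annexWeights w i j) := by
  rw [totalEta, totalEta, Fintype.sum_eq_add_sum_subtype_ne _ j, hj, zero_add, mul_sum]
  exact sum_congr rfl fun x _ => eta_eq_two_mul_eta_annexWeights hij hj x.2

lemma banzhaf_annexWeights (hij : i ≠ j) (hj : eta q w j = 0) {x : α} (hxj : x ≠ j) :
    banzhaf q (annexWeights w i j) ⟨x, hxj⟩ = banzhaf q w x := by
  rw [banzhaf, banzhaf, eta_eq_two_mul_eta_annexWeights hij hj hxj,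
    totalEta_eq_two_mul_totalEta_annexWeights hij hj, Nat.cast_mul, Nat.cast_mul,
    Nat.cast_ofNat, mul_div_mul_left _ _ two_ne_zero]

end WVG

theorem annex_dummy_banzhaf_unchanged_general
    (α : Type*) [Fintype α] [DecidableEq α]
    (q : ℕ) (w : α → ℕ) (i j : α) (hij : i ≠ j)
    (hdummy : eta q w j = 0)
    (w' : {x : α // x ≠ j} → ℕ)
    (hw' : w' = fun x : {x : α // x ≠ j} => if x.1 = i then w i + w j else w x.1) :
    (∀ (x : α) (hx : x ≠ j), x ≠ i → banzhaf q w' ⟨x, hx⟩ = banzhaf q w x) ∧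
    banzhaf q w' ⟨i, hij⟩ = banzhaf q w i := by
  subst hw'
  exact ⟨fun x hx _ => banzhaf_annexWeights hij hdummy hx,
    banzhaf_annexWeights hij hdummy hij⟩

/-- If player `i` annexes a dummy player `j` (one with `η_j = 0`), then the
Banzhaf index of every remaining player in the new game equals its Banzhaf
index in the original game; in particular the merged player's Banzhaf index
equals `β_i(v)`. -/
theorem annex_dummy_banzhaf_unchanged
    (α : Type*) [Fintype α] [DecidableEq α]
    (q : ℕ) (w : α → ℕ) (i j : α) (hij : i ≠ j)
    (hdummy : eta q w j = 0) (htot : 0 < totalEta q w)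
    (w' : {x : α // x ≠ j} → ℕ)
    (hw' : w' = fun x : {x : α // x ≠ j} => if x.1 = i then w i + w j else w x.1) :
    (∀ (x : α) (hx : x ≠ j), x ≠ i → banzhaf q w' ⟨x, hx⟩ = banzhaf q w x) ∧
    banzhaf q w' ⟨i, hij⟩ = banzhaf q w i :=
  annex_dummy_banzhaf_unchanged_general α q w i j hij hdummy w' hw'
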